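/- Let X be a proper geodesic δ-hyperbolic space, let b ∈ 𝔅̂(X) with basepoint ω_b, suppose X is K-roughly starlike from ω_b, and let ε > 0 be such that ρ_{ε,b} is a GH-density on X with constant M. Let Y be the quasihyperbolization of the incomplete uniform metric space X_{ε,b}. Then the identity map X → Y is H-biLipschitz with H depending only on δ, K, ε and M. -/

import Mathlib

/-!
Since `b` is `1`-Lipschitz, the density `ρ = e^{-εb}` varies by at most a factor `e^{εr}` on
`r`-balls, so `d_ε` is comparable to `ρ · d` at small scales, and along any curve from `p` of
length at least `d(p, q)` one gets `d_ε(p, q) ≥ ρ(p) (1 - e^{-ε d(p, q)}) / ε`.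
Rough starlikeness and `δ`-thin triangles give, from every `z`, a ray starting near `z` along
which `b` grows at unit speed up to `2δ`; its points form a `d_ε`-Cauchy sequence escaping to the
metric boundary within `d_ε`-distance `≲ ρ(z)` of `z`. Conversely, by properness every escaping
Cauchy sequence leaves all balls, so `d_ε(z, ∂X_ε) ≥ ρ(z) / ε`. Hence the quasihyperbolic
density `1 / d_ε(·, ∂X_ε)` is comparable to `1 / ρ`, which cancels `ds_ε = ρ ds`: the
quasihyperbolic length of short pieces is comparable to their length in `X`, and subdividing
geodesics (upper bound) and admissible curves (lower bound) makes this global.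
-/

open Metric Set Filter Topology
open scoped ENNReal Classical

noncomputable section

namespace Paper

variable {X Y : Type*}

/-- The distance function of a metric space. -/
def distFun (X : Type*) [MetricSpace X] : X → X → ℝ := fun p q => dist p q

/-- `e` is a genuine metric distance function. -/
def IsMetricDist (e : X → X → ℝ) : Prop :=
  (∀ x, e x x = 0) ∧ (∀ x y, x ≠ y → 0 < e x y) ∧ (∀ x y, e x y = e y x) ∧
    ∀ x y z, e x z ≤ e x y + e y z

/-- Cauchy sequence with respect to the distance function `e`. -/
def CauchyWrt (e : X → X → ℝ) (u : ℕ → X) : Prop :=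
  ∀ δ : ℝ, 0 < δ → ∃ N : ℕ, ∀ m, N ≤ m → ∀ n, N ≤ n → e (u m) (u n) < δ

/-- The sequence converges, w.r.t. `e`, to a point of the space. -/
def ConvWrt (e : X → X → ℝ) (u : ℕ → X) : Prop :=
  ∃ y : X, Tendsto (fun n => e (u n) y) atTop (𝓝 0)

/-- The space is incomplete with respect to `e`:
some Cauchy sequence does not converge in the space. -/
def IncompleteWrt (e : X → X → ℝ) : Prop :=
  ∃ u : ℕ → X, CauchyWrt e u ∧ ¬ ConvWrt e u

/-- Distance from `x` to the metric boundary (the completion minus the space),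
measured w.r.t. `e`: the infimum of the limits `lim_n e x (u n)` over all Cauchy
sequences `u` that have no limit in the space. -/
def bdryDistWrt (e : X → X → ℝ) (x : X) : ℝ :=
  sInf { r : ℝ | ∃ u : ℕ → X, CauchyWrt e u ∧ ¬ ConvWrt e u ∧
    Tendsto (fun n => e x (u n)) atTop (𝓝 r) }

/-- Sequential compactness of a set w.r.t. `e`. -/
def SeqCompactWrt (e : X → X → ℝ) (s : Set X) : Prop :=
  ∀ u : ℕ → X, (∀ n, u n ∈ s) → ∃ y ∈ s, ∃ φ : ℕ → ℕ, StrictMono φ ∧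
    Tendsto (fun n => e (u (φ n)) y) atTop (𝓝 0)

/-- Local compactness w.r.t. `e`: every point has arbitrarily small compact closed balls. -/
def LocallyCompactWrt (e : X → X → ℝ) : Prop :=
  ∀ x : X, ∀ r : ℝ, 0 < r → ∃ r' : ℝ, 0 < r' ∧ r' ≤ r ∧ SeqCompactWrt e { y | e x y ≤ r' }

/-- Continuity of a curve on a set of parameters, w.r.t. `e`. -/
def ContinuousOnWrt (e : X → X → ℝ) (γ : ℝ → X) (I : Set ℝ) : Prop :=
  ∀ t ∈ I, ∀ δ : ℝ, 0 < δ → ∃ η : ℝ, 0 < η ∧ ∀ s ∈ I, |s - t| < η → e (γ s) (γ t) < δ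

/-- The length (total variation) of the curve `γ` on the parameter set `I`, w.r.t. `e`. -/
def varOn (e : X → X → ℝ) (γ : ℝ → X) (I : Set ℝ) : ℝ≥0∞ :=
  ⨆ p : ℕ × { u : ℕ → ℝ // Monotone u ∧ ∀ i, u i ∈ I },
    ∑ i ∈ Finset.range p.1, ENNReal.ofReal (e (γ (p.2.1 (i + 1))) (γ (p.2.1 i)))

/-- `X` with distance `e` is an `A`-uniform metric space: it is a locally compact,
incomplete metric space any two of whose points are joined by an `A`-uniform curve. -/
def IsUniformSpcWrt (e : X → X → ℝ) (A : ℝ) : Prop :=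
  IsMetricDist e ∧ LocallyCompactWrt e ∧ IncompleteWrt e ∧
  ∀ x y : X, ∃ (a b : ℝ) (γ : ℝ → X), a ≤ b ∧ ContinuousOnWrt e γ (Icc a b) ∧
    γ a = x ∧ γ b = y ∧
    varOn e γ (Icc a b) ≤ ENNReal.ofReal (A * e x y) ∧
    ∀ t ∈ Icc a b, min (varOn e γ (Icc a t)) (varOn e γ (Icc t b)) ≤
      ENNReal.ofReal (A * bdryDistWrt e (γ t))

/-- `f` is `∂`-Lipschitz with data `(L, lam)`. -/
def PartialLipschitzWrt (e : X → X → ℝ) (e' : Y → Y → ℝ) (L lam : ℝ) (f : X → Y) : Prop :=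
  ∀ x y z : X, e y x < lam * bdryDistWrt e x → e z x < lam * bdryDistWrt e x →
    e' (f y) (f z) / bdryDistWrt e' (f x) ≤ L * (e y z / bdryDistWrt e x)

/-- `f` (with inverse `g`) is `∂`-biLipschitz with data `(L, lam)`. -/
def PartialBiLipschitzWrt (e : X → X → ℝ) (e' : Y → Y → ℝ) (L lam : ℝ)
    (f : X → Y) (g : Y → X) : Prop :=
  1 ≤ L ∧ Function.LeftInverse g f ∧ Function.RightInverse g f ∧
    PartialLipschitzWrt e e' L lam f ∧ PartialLipschitzWrt e' e L lam g

/-- Cross-ratio of a quadruple of points, w.r.t. `e`. -/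
def crossRatioWrt (e : X → X → ℝ) (x y z w : X) : ℝ := e x z * e y w / (e x y * e z w)

/-- `f` is `η`-quasimöbius. -/
def QuasiMobiusWrt (e : X → X → ℝ) (e' : Y → Y → ℝ) (η : ℝ → ℝ) (f : X → Y) : Prop :=
  ∀ x y z w : X, x ≠ y → x ≠ z → x ≠ w → y ≠ z → y ≠ w → z ≠ w →
    crossRatioWrt e' (f x) (f y) (f z) (f w) ≤ η (crossRatioWrt e x y z w)

/-- `f` is `η`-quasisymmetric. -/
def QuasiSymmetricWrt (e : X → X → ℝ) (e' : Y → Y → ℝ) (η : ℝ → ℝ) (f : X → Y) : Prop :=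
  ∀ x y z : X, ∀ t : ℝ, 0 ≤ t → e x y ≤ t * e x z → e' (f x) (f y) ≤ η t * e' (f x) (f z)

/-- `η` is (the restriction to `[0,∞)` of) a self-homeomorphism of `[0,∞)`:
continuous, strictly increasing, fixing `0`, and tending to `∞`. -/
def IsControlFun (η : ℝ → ℝ) : Prop :=
  ContinuousOn η (Ici 0) ∧ StrictMonoOn η (Ici 0) ∧ η 0 = 0 ∧ Tendsto η atTop atTop

/-- The conformal deformation distance with conformal factor `ρ`: the infimum of
`∫ ρ ∘ γ` over all `1`-Lipschitz (w.r.t. `e`) curves joining `x` to `y`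
(equivalently, the infimum of `∫_γ ρ ds` over all rectifiable curves joining `x` to `y`). -/
def confDistWrt (e : X → X → ℝ) (ρ : X → ℝ) (x y : X) : ℝ :=
  sInf { l : ℝ | ∃ (T : ℝ) (γ : ℝ → X), 0 ≤ T ∧
    (∀ s ∈ Icc 0 T, ∀ t ∈ Icc 0 T, e (γ s) (γ t) ≤ |s - t|) ∧
    γ 0 = x ∧ γ T = y ∧ l = ∫ t in (0:ℝ)..T, ρ (γ t) }

/-- The quasihyperbolic metric of the space with distance `e`. -/
def quasiHypWrt (e : X → X → ℝ) : X → X → ℝ :=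
  confDistWrt e fun z => (bdryDistWrt e z)⁻¹

/-- `γ` is a geodesic segment from `x` to `y`, parametrized by arclength on `[0, e x y]`. -/
def IsGeodesicSegWrt (e : X → X → ℝ) (γ : ℝ → X) (x y : X) : Prop :=
  γ 0 = x ∧ γ (e x y) = y ∧
    ∀ s ∈ Icc 0 (e x y), ∀ t ∈ Icc 0 (e x y), e (γ s) (γ t) = |s - t|

/-- Any two points are joined by a geodesic. -/
def GeodesicSpaceWrt (e : X → X → ℝ) : Prop := ∀ x y : X, ∃ γ : ℝ → X, IsGeodesicSegWrt e γ x y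

/-- The image of a geodesic segment. -/
def segImageWrt (e : X → X → ℝ) (γ : ℝ → X) (x y : X) : Set X := γ '' Icc 0 (e x y)

/-- `δ`-hyperbolicity: every geodesic triangle is `δ`-thin. -/
def DeltaHyperbolicWrt (e : X → X → ℝ) (δ : ℝ) : Prop :=
  ∀ (x y z : X) (γ₁ γ₂ γ₃ : ℝ → X),
    IsGeodesicSegWrt e γ₁ x y → IsGeodesicSegWrt e γ₂ y z → IsGeodesicSegWrt e γ₃ z x →
    (∀ p ∈ segImageWrt e γ₁ x y, ∃ q ∈ segImageWrt e γ₂ y z ∪ segImageWrt e γ₃ z x, e p q ≤ δ) ∧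
    (∀ p ∈ segImageWrt e γ₂ y z, ∃ q ∈ segImageWrt e γ₁ x y ∪ segImageWrt e γ₃ z x, e p q ≤ δ) ∧
    (∀ p ∈ segImageWrt e γ₃ z x, ∃ q ∈ segImageWrt e γ₁ x y ∪ segImageWrt e γ₂ y z, e p q ≤ δ)

/-- `γ` is a geodesic ray (defined on `[0,∞)`). -/
def IsGeodesicRayWrt (e : X → X → ℝ) (γ : ℝ → X) : Prop :=
  ∀ s ∈ Ici (0:ℝ), ∀ t ∈ Ici (0:ℝ), e (γ s) (γ t) = |s - t|

/-- `γ` is a geodesic line. -/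
def IsGeodesicLineWrt (e : X → X → ℝ) (γ : ℝ → X) : Prop :=
  ∀ s t : ℝ, e (γ s) (γ t) = |s - t|

/-- Two rays are at bounded distance from each other (represent the same
point of the Gromov boundary). -/
def RayEquivWrt (e : X → X → ℝ) (γ σ : ℝ → X) : Prop :=
  ∃ c : ℝ, ∀ t ∈ Ici (0:ℝ), e (γ t) (σ t) ≤ c

/-- The infimal distance from `x` to the set `s`, w.r.t. `e`. -/
def infDistWrt (e : X → X → ℝ) (x : X) (s : Set X) : ℝ := sInf (e x '' s)

/-- `X` is `K`-roughly starlike from the point `z`. -/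
def RoughStarlikeFromPointWrt (e : X → X → ℝ) (K : ℝ) (z : X) : Prop :=
  ∀ x : X, ∃ γ : ℝ → X, IsGeodesicRayWrt e γ ∧ γ 0 = z ∧ infDistWrt e x (γ '' Ici 0) ≤ K

/-- `X` is `K`-roughly starlike from the Gromov boundary point represented by the
geodesic ray `ρ`: every point lies within distance `K` of a geodesic line starting
from that boundary point. -/
def RoughStarlikeFromRayWrt (e : X → X → ℝ) (K : ℝ) (ρ : ℝ → X) : Prop :=
  ∀ x : X, ∃ γ : ℝ → X, IsGeodesicLineWrt e γ ∧ RayEquivWrt e (fun t => γ (-t)) ρ ∧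
    infDistWrt e x (range γ) ≤ K

/-- The Busemann function of the geodesic ray `ρ`:
`b_ρ(x) = lim_{t→∞} (e (ρ t) x - t) = inf_{t ≥ 0} (e (ρ t) x - t)`. -/
def busemannWrt (e : X → X → ℝ) (ρ : ℝ → X) (x : X) : ℝ :=
  sInf ((fun t => e (ρ t) x - t) '' Ici 0)

/-- `b ∈ 𝔅̂(X)` (either a translated distance function or a translated Busemann
function), and `X` is `K`-roughly starlike from the basepoint of `b`. -/
def BhatStarlike (e : X → X → ℝ) (K : ℝ) (b : X → ℝ) : Prop :=
  (∃ (z : X) (s : ℝ), (∀ x, b x = e x z + s) ∧ RoughStarlikeFromPointWrt e K z) ∨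
  (∃ (ρ : ℝ → X) (s : ℝ), IsGeodesicRayWrt e ρ ∧ (∀ x, b x = busemannWrt e ρ x + s) ∧
    RoughStarlikeFromRayWrt e K ρ)

/-- `ρ` is a Gehring–Hayman density with constant `M`: the `ρ`-length of any geodesic
is at most `M` times the conformal distance between its endpoints. -/
def IsGHDensityWrt (e : X → X → ℝ) (M : ℝ) (ρ : X → ℝ) : Prop :=
  ∀ (x y : X) (γ : ℝ → X), IsGeodesicSegWrt e γ x y →
    (∫ t in (0:ℝ)..(e x y), ρ (γ t)) ≤ M * confDistWrt e ρ x y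

/-- The density `ρ_{ε,b}(x) = e^{-ε b(x)}`. -/
def uniformizationDensity (b : X → ℝ) (ε : ℝ) : X → ℝ := fun x => Real.exp (-ε * b x)

/-- The Gromov product of `x` and `y` based at `z`. -/
def gromovProdWrt (e : X → X → ℝ) (z x y : X) : ℝ := (e x z + e y z - e x y) / 2

/-- The sequence `u` represents the Gromov boundary point of the geodesic ray `ρ`
(with respect to the basepoint `z`). -/
def SeqRepWrt (e : X → X → ℝ) (z : X) (ρ : ℝ → X) (u : ℕ → X) : Prop :=
  Tendsto (fun n => gromovProdWrt e z (u n) (ρ n)) atTop atTop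

/-- The Gromov product, based at `z`, of the two boundary points represented by the
geodesic rays `ρ` and `σ` (valued in `[0,∞]`). -/
def bGromovProdWrt (e : X → X → ℝ) (z : X) (ρ σ : ℝ → X) : ℝ≥0∞ :=
  ⨅ (u : { u : ℕ → X // SeqRepWrt e z ρ u }) (v : { v : ℕ → X // SeqRepWrt e z σ v }),
    Filter.liminf (fun n => ENNReal.ofReal (gromovProdWrt e z (u.1 n) (v.1 n))) atTop

/-- `S(x) = sup_{ω ∈ ∂X} inf_{ξ ∈ ∂X} (ω|ξ)_x`. -/
def Sfun (e : X → X → ℝ) (x : X) : ℝ≥0∞ :=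
  ⨆ (ω : { ρ : ℝ → X // IsGeodesicRayWrt e ρ }),
    ⨅ (ξ : { ρ : ℝ → X // IsGeodesicRayWrt e ρ }), bGromovProdWrt e x ω.1 ξ.1

/-- The filter at the left end of the interval `I`. -/
def leftEndFilter (I : Set ℝ) : Filter ℝ :=
  if BddBelow I then 𝓝[I] (sInf I) else atBot ⊓ 𝓟 I

/-- The filter at the right end of the interval `I`. -/
def rightEndFilter (I : Set ℝ) : Filter ℝ :=
  if BddAbove I then 𝓝[I] (sSup I) else atTop ⊓ 𝓟 I

/-- `γ : I → Ω` is an `A`-uniform curve: it is rectifiable with endpoints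
`γ₋, γ₊` in the completion `Ω̄` satisfying `ℓ(γ) ≤ A d(γ₋,γ₊)` (or non-rectifiable with
`d(γ(s),γ(t)) → ∞` towards the endpoints of `I`), and at every time `t` the shorter of
the two subcurves has length at most `A d_Ω(γ(t))`. -/
def IsUniformCurve {Ω : Type*} [MetricSpace Ω] (A : ℝ) (γ : ℝ → Ω) (I : Set ℝ) : Prop :=
  I.Nonempty ∧ I.OrdConnected ∧ ContinuousOn γ I ∧
  ((varOn (distFun Ω) γ I ≠ ⊤ ∧
     ∃ gm gp : UniformSpace.Completion Ω,
       Tendsto (fun t => (γ t : UniformSpace.Completion Ω)) (leftEndFilter I) (𝓝 gm) ∧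
       Tendsto (fun t => (γ t : UniformSpace.Completion Ω)) (rightEndFilter I) (𝓝 gp) ∧
       varOn (distFun Ω) γ I ≤ ENNReal.ofReal (A * dist gm gp)) ∨
   (varOn (distFun Ω) γ I = ⊤ ∧
     Tendsto (fun pq : ℝ × ℝ => dist (γ pq.1) (γ pq.2))
       (leftEndFilter I ×ˢ rightEndFilter I) atTop)) ∧
  ∀ t ∈ I, min (varOn (distFun Ω) γ (I ∩ Iic t)) (varOn (distFun Ω) γ (I ∩ Ici t)) ≤
    ENNReal.ofReal (A * bdryDistWrt (distFun Ω) (γ t))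

/-- No integrability of `f` is needed: a non-integrable `f` has integral `0`. -/
lemma intervalIntegral_le_of_le_of_nonneg {f g : ℝ → ℝ} {T : ℝ} (hT : 0 ≤ T)
    (hg : IntervalIntegrable g MeasureTheory.volume 0 T) (hg0 : ∀ t ∈ Icc 0 T, 0 ≤ g t)
    (hfg : ∀ t ∈ Icc 0 T, f t ≤ g t) :
    ∫ t in (0:ℝ)..T, f t ≤ ∫ t in (0:ℝ)..T, g t := by
  by_cases hf : IntervalIntegrable f MeasureTheory.volume 0 T
  · exact intervalIntegral.integral_mono_on hT hf hg hfg
  · rw [intervalIntegral.integral_undef hf]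
    exact intervalIntegral.integral_nonneg hT hg0

lemma integral_exp_neg_mul {ε : ℝ} (hε : ε ≠ 0) (L : ℝ) :
    ∫ t in (0:ℝ)..L, Real.exp (-(ε * t)) = (1 - Real.exp (-(ε * L))) / ε := by
  simp_rw [← neg_mul]
  rw [intervalIntegral.integral_comp_mul_left (fun u => Real.exp u) (neg_ne_zero.2 hε),
    integral_exp, mul_zero, Real.exp_zero, smul_eq_mul]
  field_simp
  ring

lemma exp_neg_two_mul_le_one_sub {v : ℝ} (h0 : 0 ≤ v) (h : v ≤ 1 / 2) :
    Real.exp (-(2 * v)) ≤ 1 - v := by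
  have hinv : Real.exp (-(2 * v)) * Real.exp (2 * v) = 1 := by rw [← Real.exp_add]; simp
  nlinarith [Real.add_one_le_exp (2 * v), Real.exp_pos (-(2 * v))]

section ConformalDistance

variable {e : X → X → ℝ} {ρ : X → ℝ}

def IsAdmissibleWrt (e : X → X → ℝ) (γ : ℝ → X) (T : ℝ) : Prop :=
  ∀ s ∈ Icc (0:ℝ) T, ∀ t ∈ Icc (0:ℝ) T, e (γ s) (γ t) ≤ |s - t|

def confSet (e : X → X → ℝ) (ρ : X → ℝ) (x y : X) : Set ℝ :=
  { l | ∃ (T : ℝ) (γ : ℝ → X), 0 ≤ T ∧ IsAdmissibleWrt e γ T ∧ γ 0 = x ∧ γ T = y ∧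
    l = ∫ t in (0:ℝ)..T, ρ (γ t) }

lemma confDistWrt_eq_sInf (e : X → X → ℝ) (ρ : X → ℝ) (x y : X) :
    confDistWrt e ρ x y = sInf (confSet e ρ x y) := rfl

lemma IsAdmissibleWrt.reverse {γ : ℝ → X} {T : ℝ} (hγ : IsAdmissibleWrt e γ T) :
    IsAdmissibleWrt e (fun t => γ (T - t)) T := by
  intro s hs t ht
  have := hγ (T - s) ⟨by linarith [hs.2], by linarith [hs.1]⟩
    (T - t) ⟨by linarith [ht.2], by linarith [ht.1]⟩
  rwa [show T - s - (T - t) = t - s by ring, abs_sub_comm] at this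

lemma confSet_subset_swap (x y : X) : confSet e ρ x y ⊆ confSet e ρ y x := by
  rintro l ⟨T, γ, hT, hγ, rfl, rfl, rfl⟩
  refine ⟨T, fun t => γ (T - t), hT, hγ.reverse, by simp, by simp, ?_⟩
  simpa using (intervalIntegral.integral_comp_sub_left (fun t => ρ (γ t)) T
    (a := 0) (b := T)).symm

lemma confDistWrt_comm (x y : X) : confDistWrt e ρ x y = confDistWrt e ρ y x := by
  rw [confDistWrt_eq_sInf, confDistWrt_eq_sInf,
    (confSet_subset_swap x y).antisymm (confSet_subset_swap y x)]

section NonnegDensity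

variable (hρ : ∀ z, 0 ≤ ρ z)

include hρ

lemma confSet_nonneg {x y : X} {l : ℝ} (hl : l ∈ confSet e ρ x y) : 0 ≤ l := by
  obtain ⟨T, γ, hT, -, -, -, rfl⟩ := hl
  exact intervalIntegral.integral_nonneg hT fun t _ => hρ _

lemma confDistWrt_nonneg (x y : X) : 0 ≤ confDistWrt e ρ x y :=
  Real.sInf_nonneg fun _ => confSet_nonneg hρ

lemma confDistWrt_le_integral {γ : ℝ → X} {T : ℝ} (hT : 0 ≤ T) (hγ : IsAdmissibleWrt e γ T) :
    confDistWrt e ρ (γ 0) (γ T) ≤ ∫ t in (0:ℝ)..T, ρ (γ t) :=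
  csInf_le ⟨0, fun _ => confSet_nonneg hρ⟩ ⟨T, γ, hT, hγ, rfl, rfl, rfl⟩

end NonnegDensity

lemma le_confDistWrt {x y : X} {c : ℝ} (hne : (confSet e ρ x y).Nonempty)
    (h : ∀ (T : ℝ) (γ : ℝ → X), 0 ≤ T → IsAdmissibleWrt e γ T → γ 0 = x → γ T = y →
      c ≤ ∫ t in (0:ℝ)..T, ρ (γ t)) :
    c ≤ confDistWrt e ρ x y := by
  refine le_csInf hne ?_
  rintro l ⟨T, γ, hT, hγ, h0, h1, rfl⟩
  exact h T γ hT hγ h0 h1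

def concatCurve (γ₁ γ₂ : ℝ → X) (T₁ : ℝ) (t : ℝ) : X :=
  if t ≤ T₁ then γ₁ t else γ₂ (t - T₁)

lemma IsAdmissibleWrt.concat (htri : ∀ x y z, e x z ≤ e x y + e y z) {γ₁ γ₂ : ℝ → X}
    {T₁ T₂ : ℝ} (hγ₁ : IsAdmissibleWrt e γ₁ T₁) (hγ₂ : IsAdmissibleWrt e γ₂ T₂)
    (hT₁ : 0 ≤ T₁) (hT₂ : 0 ≤ T₂) (hjoin : γ₁ T₁ = γ₂ 0) :
    IsAdmissibleWrt e (concatCurve γ₁ γ₂ T₁) (T₁ + T₂) := by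
  have h₁ : ∀ s ∈ Icc 0 T₁, e (γ₁ s) (γ₂ 0) ≤ T₁ - s ∧ e (γ₂ 0) (γ₁ s) ≤ T₁ - s := by
    intro s hs
    have hT := right_mem_Icc.2 hT₁
    rw [← hjoin, ← abs_of_nonneg (sub_nonneg.2 hs.2), abs_sub_comm]
    exact ⟨hγ₁ s hs T₁ hT, abs_sub_comm T₁ s ▸ hγ₁ T₁ hT s hs⟩
  have h₂ : ∀ t ∈ Icc 0 T₂, e (γ₂ 0) (γ₂ t) ≤ t ∧ e (γ₂ t) (γ₂ 0) ≤ t := by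
    intro t ht
    have h0 := left_mem_Icc.2 hT₂
    have := hγ₂ 0 h0 t ht
    have := hγ₂ t ht 0 h0
    simp_all [abs_of_nonneg ht.1]
  intro s hs t ht
  unfold concatCurve
  split_ifs with hsT htT htT
  · exact hγ₁ s ⟨hs.1, hsT⟩ t ⟨ht.1, htT⟩
  · have hA := (h₁ s ⟨hs.1, hsT⟩).1
    have hB := (h₂ (t - T₁) ⟨by linarith, by linarith [ht.2]⟩).1
    calc e (γ₁ s) (γ₂ (t - T₁)) ≤ (T₁ - s) + (t - T₁) := (htri _ _ _).trans (add_le_add hA hB)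
      _ ≤ |s - t| := by rw [abs_sub_comm]; linarith [le_abs_self (t - s)]
  · have hA := (h₂ (s - T₁) ⟨by linarith, by linarith [hs.2]⟩).2
    have hB := (h₁ t ⟨ht.1, htT⟩).2
    calc e (γ₂ (s - T₁)) (γ₁ t) ≤ (s - T₁) + (T₁ - t) := (htri _ _ _).trans (add_le_add hA hB)
      _ ≤ |s - t| := by linarith [le_abs_self (s - t)]
  · have := hγ₂ (s - T₁) ⟨by linarith, by linarith [hs.2]⟩
      (t - T₁) ⟨by linarith, by linarith [ht.2]⟩
    rwa [sub_sub_sub_cancel_right] at this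

lemma integral_concatCurve_le (hρ : ∀ z, 0 ≤ ρ z) {γ₁ γ₂ : ℝ → X} {T₁ T₂ : ℝ}
    (hT₁ : 0 ≤ T₁) (hT₂ : 0 ≤ T₂) (hjoin : γ₁ T₁ = γ₂ 0) :
    ∫ t in (0:ℝ)..(T₁ + T₂), ρ (concatCurve γ₁ γ₂ T₁ t) ≤
      (∫ t in (0:ℝ)..T₁, ρ (γ₁ t)) + ∫ t in (0:ℝ)..T₂, ρ (γ₂ t) := by
  set f := fun t => ρ (concatCurve γ₁ γ₂ T₁ t)
  by_cases hf : IntervalIntegrable f MeasureTheory.volume 0 (T₁ + T₂)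
  · have hsub : ∀ {a b}, a ∈ Icc 0 (T₁ + T₂) → b ∈ Icc 0 (T₁ + T₂) →
        IntervalIntegrable f MeasureTheory.volume a b := fun ha hb =>
      hf.mono_set (uIcc_subset_uIcc (by rwa [uIcc_of_le (by linarith)])
        (by rwa [uIcc_of_le (by linarith)]))
    have hmid : T₁ ∈ Icc 0 (T₁ + T₂) := ⟨hT₁, by linarith⟩
    have hend : (0:ℝ) ∈ Icc 0 (T₁ + T₂) := ⟨le_rfl, by linarith⟩
    rw [← intervalIntegral.integral_add_adjacent_intervals (hsub hend hmid)
      (hsub hmid (right_mem_Icc.2 (by linarith)))]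
    refine le_of_eq (congrArg₂ _ (intervalIntegral.integral_congr fun t ht => ?_) ?_)
    · rw [uIcc_of_le hT₁] at ht
      simp [f, concatCurve, ht.2]
    · have hshift := intervalIntegral.integral_comp_sub_right (fun u => ρ (γ₂ u)) T₁
        (a := T₁) (b := T₁ + T₂)
      rw [sub_self, add_sub_cancel_left] at hshift
      rw [← hshift]
      refine intervalIntegral.integral_congr fun t ht => ?_
      rw [uIcc_of_le (by linarith)] at ht
      rcases ht.1.eq_or_lt with h | h
      · simp [f, concatCurve, ← h, hjoin]
      · simp [f, concatCurve, not_le.2 h]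
  · rw [intervalIntegral.integral_undef hf]
    exact add_nonneg (intervalIntegral.integral_nonneg hT₁ fun t _ => hρ _)
      (intervalIntegral.integral_nonneg hT₂ fun t _ => hρ _)

lemma confDistWrt_triangle (hρ : ∀ z, 0 ≤ ρ z) (htri : ∀ x y z, e x z ≤ e x y + e y z)
    {x y z : X} (hxy : (confSet e ρ x y).Nonempty) (hyz : (confSet e ρ y z).Nonempty) :
    confDistWrt e ρ x z ≤ confDistWrt e ρ x y + confDistWrt e ρ y z := by
  have key : ∀ l₁ ∈ confSet e ρ x y, ∀ l₂ ∈ confSet e ρ y z, confDistWrt e ρ x z ≤ l₁ + l₂ := by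
    rintro _ ⟨T₁, γ₁, hT₁, hγ₁, rfl, h₁, rfl⟩ _ ⟨T₂, γ₂, hT₂, hγ₂, h₂, rfl, rfl⟩
    have hjoin : γ₁ T₁ = γ₂ 0 := h₁.trans h₂.symm
    have hstart : concatCurve γ₁ γ₂ T₁ 0 = γ₁ 0 := by simp [concatCurve, hT₁]
    have hfin : concatCurve γ₁ γ₂ T₁ (T₁ + T₂) = γ₂ T₂ := by
      rcases hT₂.eq_or_lt with h | h
      · simp [concatCurve, ← h, hjoin]
      · simp [concatCurve, h]
    calc confDistWrt e ρ (γ₁ 0) (γ₂ T₂)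
        ≤ ∫ t in (0:ℝ)..(T₁ + T₂), ρ (concatCurve γ₁ γ₂ T₁ t) := by
          rw [← hstart, ← hfin]
          exact confDistWrt_le_integral hρ (by linarith) (hγ₁.concat htri hγ₂ hT₁ hT₂ hjoin)
      _ ≤ _ := integral_concatCurve_le hρ hT₁ hT₂ hjoin
  have : confDistWrt e ρ x z - confDistWrt e ρ y z ≤ confDistWrt e ρ x y :=
    le_csInf hxy fun l₁ hl₁ => by
      have : confDistWrt e ρ x z - l₁ ≤ confDistWrt e ρ y z :=
        le_csInf hyz fun l₂ hl₂ => by linarith [key l₁ hl₁ l₂ hl₂]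
      linarith
  linarith

lemma confDistWrt_le_mul (hρ : ∀ z, 0 ≤ ρ z) {γ : ℝ → X}
    {T c : ℝ} (hT : 0 ≤ T) (hγ : IsAdmissibleWrt e γ T) (hc : ∀ t ∈ Icc 0 T, ρ (γ t) ≤ c) :
    confDistWrt e ρ (γ 0) (γ T) ≤ c * T := by
  have hc0 : 0 ≤ c := (hρ _).trans (hc 0 (left_mem_Icc.2 hT))
  calc confDistWrt e ρ (γ 0) (γ T) ≤ ∫ t in (0:ℝ)..T, ρ (γ t) := confDistWrt_le_integral hρ hT hγ
    _ ≤ ∫ _ in (0:ℝ)..T, c :=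
      intervalIntegral_le_of_le_of_nonneg hT intervalIntegrable_const (fun _ _ => hc0) hc
    _ = c * T := by simp [mul_comm]

end ConformalDistance

section BoundaryDistance

variable {e : X → X → ℝ}

lemma bdryDistWrt_nonneg (he : ∀ p q, 0 ≤ e p q) (x : X) : 0 ≤ bdryDistWrt e x :=
  Real.sInf_nonneg fun _ ⟨_, _, _, hlim⟩ => ge_of_tendsto' hlim fun _ => he _ _

lemma bdryDistWrt_le_of_tendsto (he : ∀ p q, 0 ≤ e p q) {x : X} {u : ℕ → X} {r : ℝ}
    (hu : CauchyWrt e u) (hnc : ¬ ConvWrt e u) (hr : Tendsto (fun n => e x (u n)) atTop (𝓝 r)) :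
    bdryDistWrt e x ≤ r :=
  csInf_le ⟨0, fun _ ⟨_, _, _, hlim⟩ => ge_of_tendsto' hlim fun _ => he _ _⟩ ⟨u, hu, hnc, hr⟩

lemma le_bdryDistWrt {x : X} {c : ℝ}
    (hne : ∃ (u : ℕ → X) (r : ℝ), CauchyWrt e u ∧ ¬ ConvWrt e u ∧
      Tendsto (fun n => e x (u n)) atTop (𝓝 r))
    (h : ∀ (u : ℕ → X) (r : ℝ), CauchyWrt e u → ¬ ConvWrt e u →
      Tendsto (fun n => e x (u n)) atTop (𝓝 r) → c ≤ r) :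
    c ≤ bdryDistWrt e x := by
  obtain ⟨u, r, hu, hnc, hr⟩ := hne
  exact le_csInf ⟨r, u, hu, hnc, hr⟩ fun r' ⟨u', hu', hnc', hr'⟩ => h u' r' hu' hnc' hr'

variable (htri : ∀ x y z, e x z ≤ e x y + e y z)

include htri

lemma CauchyWrt.exists_tendsto {u : ℕ → X} (hu : CauchyWrt e u) (x : X) :
    ∃ r, Tendsto (fun n => e x (u n)) atTop (𝓝 r) := by
  refine cauchySeq_tendsto_of_complete (Metric.cauchySeq_iff.2 fun θ hθ => ?_)
  obtain ⟨N, hN⟩ := hu θ hθ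
  refine ⟨N, fun m hm n hn => ?_⟩
  rw [Real.dist_eq, abs_sub_lt_iff]
  constructor <;> linarith [htri x (u n) (u m), htri x (u m) (u n), hN m hm n hn, hN n hn m hm]

lemma CauchyWrt.convWrt_of_subseq {u : ℕ → X} (hu : CauchyWrt e u) {φ : ℕ → ℕ}
    (hφ : StrictMono φ) {y : X} (hy : Tendsto (fun n => e (u (φ n)) y) atTop (𝓝 0))
    (he : ∀ p q, 0 ≤ e p q) : ConvWrt e u := by
  refine ⟨y, Metric.tendsto_atTop.2 fun θ hθ => ?_⟩
  obtain ⟨N, hN⟩ := hu (θ / 2) (by linarith)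
  obtain ⟨k, hk⟩ := (Metric.tendsto_atTop.1 hy) (θ / 2) (by linarith)
  set j := max k N
  have hj : N ≤ φ j := (le_max_right k N).trans hφ.le_apply
  have hφj := hk j (le_max_left k N)
  refine ⟨N, fun n hn => ?_⟩
  rw [Real.dist_eq, sub_zero, abs_of_nonneg (he _ _)] at hφj ⊢
  linarith [htri (u n) (u (φ j)) y, hN n hn (φ j) hj]

lemma bdryDistWrt_le_add (he : ∀ p q, 0 ≤ e p q) (hinc : IncompleteWrt e) (p q : X) :
    bdryDistWrt e p ≤ e p q + bdryDistWrt e q := by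
  obtain ⟨u₀, hu₀, hnc₀⟩ := hinc
  obtain ⟨r₀, hr₀⟩ := hu₀.exists_tendsto htri q
  suffices bdryDistWrt e p - e p q ≤ bdryDistWrt e q by linarith
  refine le_bdryDistWrt ⟨u₀, r₀, hu₀, hnc₀, hr₀⟩ fun u r hu hnc hr => ?_
  obtain ⟨r', hr'⟩ := hu.exists_tendsto htri p
  have : r' ≤ e p q + r :=
    le_of_tendsto_of_tendsto' hr' (hr.const_add _) fun n => htri p q (u n)
  linarith [bdryDistWrt_le_of_tendsto he hu hnc hr']

end BoundaryDistance

section Geodesics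

variable [MetricSpace X] {γ : ℝ → X} {δ : ℝ}

@[simp] lemma distFun_apply (p q : X) : distFun X p q = dist p q := rfl

lemma IsGeodesicRayWrt.dist_eq_sub (hγ : IsGeodesicRayWrt (distFun X) γ) {s t : ℝ}
    (hs : 0 ≤ s) (hst : s ≤ t) : dist (γ s) (γ t) = t - s := by
  rw [← abs_of_nonneg (sub_nonneg.2 hst), abs_sub_comm]
  exact hγ s hs t (hs.trans hst)

lemma IsGeodesicLineWrt.dist_eq_sub (hγ : IsGeodesicLineWrt (distFun X) γ) {s t : ℝ}
    (hst : s ≤ t) : dist (γ s) (γ t) = t - s := by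
  rw [← abs_of_nonneg (sub_nonneg.2 hst), abs_sub_comm]
  exact hγ s t

lemma IsGeodesicLineWrt.isGeodesicSegWrt (hγ : IsGeodesicLineWrt (distFun X) γ) {a c : ℝ}
    (hac : a ≤ c) : IsGeodesicSegWrt (distFun X) (fun r => γ (a + r)) (γ a) (γ c) := by
  refine ⟨by simp, by simp [hγ.dist_eq_sub hac], fun s _ t _ => ?_⟩
  rw [hγ (a + s) (a + t), add_sub_add_left_eq_sub]

lemma IsGeodesicSegWrt.dist_left {γ : ℝ → X} {p q : X} (hγ : IsGeodesicSegWrt (distFun X) γ p q)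
    {t : ℝ} (ht : t ∈ Icc 0 (dist p q)) : dist p (γ t) = t := by
  have := hγ.2.2 0 (left_mem_Icc.2 dist_nonneg) t (by simpa using ht)
  simpa [hγ.1, abs_of_nonneg ht.1] using this

lemma IsGeodesicSegWrt.dist_add_dist_eq {p q : X} (hγ : IsGeodesicSegWrt (distFun X) γ p q)
    {t : ℝ} (ht : t ∈ Icc 0 (dist p q)) : dist p (γ t) + dist (γ t) q = dist p q := by
  have h := hγ.2.2 t (by simpa using ht) (dist p q) (by simp)
  rw [show γ (dist p q) = q from hγ.2.1] at h
  simp only [distFun_apply] at h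
  rw [hγ.dist_left ht, h, abs_of_nonpos (by linarith [ht.2])]
  ring

lemma IsGeodesicSegWrt.dist_add_dist_le {p q : X} (hγ : IsGeodesicSegWrt (distFun X) γ p q)
    {x y : X} (hy : y ∈ segImageWrt (distFun X) γ p q) (hxy : dist x y ≤ δ) :
    dist p x + dist x q ≤ dist p q + 2 * δ := by
  obtain ⟨t, ht, rfl⟩ := hy
  linarith [hγ.dist_add_dist_eq (by simpa using ht), dist_triangle p (γ t) x,
    dist_triangle x (γ t) q, dist_comm x (γ t)]

lemma DeltaHyperbolicWrt.dist_add_dist_le_or (hHyp : DeltaHyperbolicWrt (distFun X) δ)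
    (hGeo : GeodesicSpaceWrt (distFun X)) {A B C : X} (hγ : IsGeodesicSegWrt (distFun X) γ A B)
    {x : X} (hx : x ∈ segImageWrt (distFun X) γ A B) :
    dist B x + dist x C ≤ dist B C + 2 * δ ∨ dist C x + dist x A ≤ dist C A + 2 * δ := by
  obtain ⟨γ₂, hγ₂⟩ := hGeo B C
  obtain ⟨γ₃, hγ₃⟩ := hGeo C A
  obtain ⟨y, hy | hy, hxy⟩ := (hHyp A B C γ γ₂ γ₃ hγ hγ₂ hγ₃).1 x hx
  · exact Or.inl (hγ₂.dist_add_dist_le hy hxy)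
  · exact Or.inr (hγ₃.dist_add_dist_le hy hxy)

lemma isAdmissibleWrt_shift {γ : ℝ → X} {a L : ℝ}
    (hγ : ∀ s ∈ Icc a (a + L), ∀ t ∈ Icc a (a + L), dist (γ s) (γ t) ≤ |s - t|) :
    IsAdmissibleWrt (distFun X) (fun t => γ (a + t)) L := by
  intro s hs t ht
  have := hγ (a + s) ⟨by linarith [hs.1], by linarith [hs.2]⟩
    (a + t) ⟨by linarith [ht.1], by linarith [ht.2]⟩
  rwa [add_sub_add_left_eq_sub] at this

lemma IsAdmissibleWrt.continuousOn {γ : ℝ → X} {T : ℝ}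
    (hγ : IsAdmissibleWrt (distFun X) γ T) : ContinuousOn γ (Icc 0 T) :=
  (LipschitzOnWith.of_dist_le_mul (K := 1) fun s hs t ht => by
    simpa [Real.dist_eq] using hγ s hs t ht).continuousOn

lemma confSet_nonempty_of_geodesicSpace (hGeo : GeodesicSpaceWrt (distFun X)) (ρ : X → ℝ)
    (p q : X) : (confSet (distFun X) ρ p q).Nonempty := by
  obtain ⟨γ, h0, h1, hγ⟩ := hGeo p q
  exact ⟨_, dist p q, γ, dist_nonneg, fun s hs t ht => (hγ s hs t ht).le, h0, h1, rfl⟩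

end Geodesics

section Subdivision

variable [MetricSpace X]

lemma le_mul_dist_of_local_bound (hGeo : GeodesicSpaceWrt (distFun X)) {f : X → X → ℝ}
    (htri : ∀ x y z, f x z ≤ f x y + f y z) {r L : ℝ} (hr : 0 < r)
    (hloc : ∀ p q, dist p q ≤ r → f p q ≤ L * dist p q) (x y : X) :
    f x y ≤ L * dist x y := by
  obtain ⟨γ, hγ0, hγD, hγ⟩ := hGeo x y
  set D := dist x y
  set n : ℕ := ⌊D / r⌋₊ + 1
  have hn : (0:ℝ) < n := by positivity
  have hΔ : D / n ≤ r := by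
    rw [div_le_iff₀ hn, ← div_le_iff₀' hr]
    exact (Nat.lt_floor_add_one (D / r)).le.trans (by simp [n])
  have hmem : ∀ j : ℕ, j ≤ n → (j:ℝ) * (D / n) ∈ Icc 0 (distFun X x y) := fun j hj =>
    ⟨by positivity, by
      rw [distFun_apply, mul_div_left_comm]
      exact mul_le_of_le_one_right dist_nonneg
        ((div_le_one hn).2 (Nat.cast_le.2 hj))⟩
  have hchain : ∀ j : ℕ, j ≤ n → f x (γ (j * (D / n))) ≤ j * (L * (D / n)) := by
    intro j
    induction j with
    | zero => intro _; simpa [hγ0] using hloc x x (by simpa using hr.le)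
    | succ j ih =>
      intro hj
      have hstep : dist (γ (j * (D / n))) (γ ((j + 1 : ℕ) * (D / n))) = D / n := by
        have := hγ _ (hmem j (by omega)) _ (hmem (j + 1) hj)
        rw [distFun_apply] at this
        rw [this]
        push_cast
        rw [show (j:ℝ) * (D / n) - (j + 1) * (D / n) = -(D / n) by ring, abs_neg,
          abs_of_nonneg (by positivity)]
      have hloc' := hloc _ _ (hstep.trans_le hΔ)
      rw [hstep] at hloc'
      calc f x (γ ((j + 1 : ℕ) * (D / n)))
          ≤ f x (γ (j * (D / n))) + f (γ (j * (D / n))) (γ ((j + 1 : ℕ) * (D / n))) :=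
            htri _ _ _
        _ ≤ j * (L * (D / n)) + L * (D / n) := add_le_add (ih (by omega)) hloc'
        _ = (j + 1 : ℕ) * (L * (D / n)) := by push_cast; ring
  have := hchain n le_rfl
  rwa [mul_div_cancel₀ _ hn.ne', show γ D = y from hγD, ← mul_assoc, mul_comm (n:ℝ),
    mul_assoc, mul_div_cancel₀ _ hn.ne'] at this

lemma mul_dist_le_integral_of_local_bound {σ : ℝ → X} {g : ℝ → ℝ} {T η c : ℝ} (hT : 0 ≤ T)
    (hη : 0 < η) (hc : 0 ≤ c) (hg : IntervalIntegrable g MeasureTheory.volume 0 T)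
    (hloc : ∀ s t, 0 ≤ s → s ≤ t → t ≤ T → t - s ≤ η →
      c * dist (σ s) (σ t) ≤ ∫ r in s..t, g r) :
    c * dist (σ 0) (σ T) ≤ ∫ r in (0:ℝ)..T, g r := by
  set n : ℕ := ⌊T / η⌋₊ + 1
  have hn : (0:ℝ) < n := by positivity
  set a : ℕ → ℝ := fun i => i * (T / n)
  have ha0 : a 0 = 0 := by simp [a]
  have han : a n = T := mul_div_cancel₀ _ hn.ne'
  have hstep : ∀ i, a (i + 1) - a i = T / n := fun i => by simp only [a]; push_cast; ring
  have hTn : 0 ≤ T / n := by positivity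
  have hmem : ∀ i ≤ n, 0 ≤ a i ∧ a i ≤ T := fun i hi =>
    ⟨by positivity, by
      rw [← han]
      exact mul_le_mul_of_nonneg_right (Nat.cast_le.2 hi) hTn⟩
  have hsmall : T / n ≤ η := by
    rw [div_le_iff₀ hn, ← div_le_iff₀' hη]
    exact (Nat.lt_floor_add_one (T / η)).le.trans (by simp [n])
  have hint : ∀ i < n, IntervalIntegrable g MeasureTheory.volume (a i) (a (i + 1)) :=
    fun i hi => hg.mono_set (uIcc_subset_uIcc
      (by rw [uIcc_of_le hT]; exact hmem i hi.le)
      (by rw [uIcc_of_le hT]; exact hmem (i + 1) hi))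
  calc c * dist (σ 0) (σ T) = c * dist (σ (a 0)) (σ (a n)) := by rw [ha0, han]
    _ ≤ c * ∑ i ∈ Finset.range n, dist (σ (a i)) (σ (a (i + 1))) :=
      mul_le_mul_of_nonneg_left (dist_le_range_sum_dist (fun i => σ (a i)) n) hc
    _ = ∑ i ∈ Finset.range n, c * dist (σ (a i)) (σ (a (i + 1))) := Finset.mul_sum _ _ _
    _ ≤ ∑ i ∈ Finset.range n, ∫ r in a i..a (i + 1), g r := by
      refine Finset.sum_le_sum fun i hi => ?_
      have hi := Finset.mem_range.1 hi
      exact hloc _ _ (hmem i hi.le).1 (by linarith [hstep i]) (hmem (i + 1) hi).2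
        (by rw [hstep]; exact hsmall)
    _ = ∫ r in (0:ℝ)..T, g r := by
      rw [intervalIntegral.sum_integral_adjacent_intervals hint, ha0, han]

end Subdivision

section Busemann

variable [MetricSpace X] {γ : ℝ → X} {δ : ℝ}

lemma busemannWrt_le (hγ : IsGeodesicRayWrt (distFun X) γ) (x : X) {t : ℝ} (ht : 0 ≤ t) :
    busemannWrt (distFun X) γ x ≤ dist (γ t) x - t := by
  refine csInf_le ⟨-dist (γ 0) x, ?_⟩ ⟨t, ht, rfl⟩
  rintro _ ⟨s, hs, rfl⟩
  have := hγ.dist_eq_sub le_rfl hs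
  simp only [distFun]
  linarith [dist_triangle (γ 0) x (γ s), dist_comm x (γ s)]

lemma le_busemannWrt_of_forall_ge (hγ : IsGeodesicRayWrt (distFun X) γ) {x : X} {a V : ℝ}
    (h : ∀ v, V ≤ v → a ≤ dist (γ v) x - v) : a ≤ busemannWrt (distFun X) γ x := by
  refine le_csInf ⟨_, 0, mem_Ici.2 le_rfl, rfl⟩ ?_
  rintro _ ⟨u, hu, rfl⟩
  rcases le_total V u with hVu | huV
  · exact h u hVu
  · have := hγ.dist_eq_sub hu huV
    simp only [distFun]
    linarith [h V le_rfl, dist_triangle (γ V) (γ u) x, dist_comm (γ u) (γ V)]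

lemma lipschitzWith_busemannWrt (hγ : IsGeodesicRayWrt (distFun X) γ) :
    LipschitzWith 1 (busemannWrt (distFun X) γ) := by
  refine LipschitzWith.of_le_add fun x y => ?_
  suffices busemannWrt (distFun X) γ x - dist x y ≤ busemannWrt (distFun X) γ y by linarith
  refine le_busemannWrt_of_forall_ge hγ (V := 0) fun v hv => ?_
  linarith [busemannWrt_le hγ x hv, dist_triangle (γ v) y x, dist_comm x y]

lemma BhatStarlike.lipschitzWith {K : ℝ} {b : X → ℝ} (hb : BhatStarlike (distFun X) K b) :
    LipschitzWith 1 b := by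
  rcases hb with ⟨z, s, hbz, -⟩ | ⟨γ, s, hγ, hbγ, -⟩
  · rw [show b = fun x => dist x z + s from funext hbz]
    exact LipschitzWith.of_le_add fun x y => by linarith [dist_triangle x y z]
  · rw [show b = fun x => busemannWrt (distFun X) γ x + s from funext hbγ]
    refine LipschitzWith.of_le_add fun x y => ?_
    have := (lipschitzWith_busemannWrt hγ).dist_le_mul x y
    rw [Real.dist_eq, NNReal.coe_one, one_mul] at this
    linarith [le_abs_self (busemannWrt (distFun X) γ x - busemannWrt (distFun X) γ y)]

/-- The defect `2δ` comes from the thin triangle with vertices `γ (-v)`, `γ t` and `ρ₀ v`,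
`v → ∞`: the point `γ t'` cannot stay close to the side joining the two far ends. -/
lemma busemannWrt_add_le_of_isGeodesicLine (hGeo : GeodesicSpaceWrt (distFun X))
    (hHyp : DeltaHyperbolicWrt (distFun X) δ) {ρ₀ : ℝ → X}
    (hρ₀ : IsGeodesicRayWrt (distFun X) ρ₀) (hγ : IsGeodesicLineWrt (distFun X) γ)
    (hequiv : RayEquivWrt (distFun X) (fun t => γ (-t)) ρ₀) {t' t : ℝ} (htt : t' ≤ t) :
    busemannWrt (distFun X) ρ₀ (γ t') + (t - t') - 2 * δ ≤ busemannWrt (distFun X) ρ₀ (γ t) := by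
  obtain ⟨c, hc⟩ := hequiv
  refine le_busemannWrt_of_forall_ge hρ₀ (V := max (max (-t') (c + δ - t' + 1)) 0) ?_
  intro v hv
  simp only [max_le_iff] at hv
  have hx : γ t' ∈ segImageWrt (distFun X) (fun r => γ (-v + r)) (γ (-v)) (γ t) :=
    ⟨t' + v, ⟨by linarith, by rw [distFun_apply, hγ.dist_eq_sub (by linarith)]; linarith⟩,
      by simp⟩
  have hAx := hγ.dist_eq_sub (show -v ≤ t' by linarith)
  have hBx := hγ.dist_eq_sub htt
  have hCA : dist (ρ₀ v) (γ (-v)) ≤ c := by simpa [dist_comm] using hc v hv.2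
  have hbus := busemannWrt_le hρ₀ (γ t') hv.2
  rcases hHyp.dist_add_dist_le_or (C := ρ₀ v) hGeo
    (hγ.isGeodesicSegWrt (show -v ≤ t by linarith)) hx with h | h
  · linarith [dist_comm (γ t) (ρ₀ v), dist_comm (γ t') (ρ₀ v), dist_comm (γ t) (γ t')]
  · linarith [dist_triangle (γ (-v)) (ρ₀ v) (γ t'), dist_comm (γ (-v)) (ρ₀ v),
      dist_comm (γ t') (γ (-v))]

lemma exists_dist_lt_of_infDistWrt_le {x : X} {S : Set X} (hS : S.Nonempty) {K : ℝ}
    (h : infDistWrt (distFun X) x S ≤ K) : ∃ y ∈ S, dist x y < K + 1 := by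
  obtain ⟨_, ⟨y, hy, rfl⟩, hlt⟩ := exists_lt_of_csInf_lt (hS.image _) (h.trans_lt (lt_add_one K))
  exact ⟨y, hy, hlt⟩

/-- `K + 1` rather than `K`: the infimum in rough starlikeness need not be attained. -/
lemma BhatStarlike.exists_escapeRay (hδ : 0 ≤ δ) (hGeo : GeodesicSpaceWrt (distFun X))
    (hHyp : DeltaHyperbolicWrt (distFun X) δ) {K : ℝ} {b : X → ℝ}
    (hb : BhatStarlike (distFun X) K b) (z : X) :
    ∃ Γ : ℝ → X, IsGeodesicRayWrt (distFun X) Γ ∧ dist z (Γ 0) ≤ K + 1 ∧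
      ∀ t' t, 0 ≤ t' → t' ≤ t → b (Γ t') + (t - t') - 2 * δ ≤ b (Γ t) := by
  rcases hb with ⟨z₀, s, hbz, hstar⟩ | ⟨ρ₀, s, hρ₀, hbρ, hstar⟩
  · obtain ⟨γ, hγ, hγ0, hinf⟩ := hstar z
    obtain ⟨_, ⟨t₀, ht₀, rfl⟩, hzt₀⟩ := exists_dist_lt_of_infDistWrt_le
      ⟨_, mem_image_of_mem γ (mem_Ici.2 le_rfl)⟩ hinf
    have ht₀ : (0:ℝ) ≤ t₀ := ht₀
    refine ⟨fun t => γ (t₀ + t), fun s hs t ht => ?_, by simpa using hzt₀.le, ?_⟩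
    · rw [hγ _ (add_nonneg ht₀ hs) _ (add_nonneg ht₀ ht), add_sub_add_left_eq_sub]
    · intro t' t ht' htt
      have hd : ∀ u, 0 ≤ u → b (γ (t₀ + u)) = t₀ + u + s := fun u hu => by
        rw [hbz, ← hγ0, distFun_apply, dist_comm, hγ.dist_eq_sub le_rfl (by linarith), sub_zero]
      rw [hd t' ht', hd t (ht'.trans htt)]
      linarith
  · obtain ⟨γ, hγ, hequiv, hinf⟩ := hstar z
    obtain ⟨_, ⟨t₀, rfl⟩, hzt₀⟩ := exists_dist_lt_of_infDistWrt_le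
      ⟨_, mem_range_self 0⟩ hinf
    refine ⟨fun t => γ (t₀ + t), fun s _ t _ => ?_, by simpa using hzt₀.le, ?_⟩
    · rw [hγ (t₀ + s) (t₀ + t), add_sub_add_left_eq_sub]
    · intro t' t _ htt
      rw [hbρ, hbρ]
      linarith [busemannWrt_add_le_of_isGeodesicLine hGeo hHyp hρ₀ hγ hequiv
        (show t₀ + t' ≤ t₀ + t by linarith)]

end Busemann

lemma uniformizationDensity_pos (b : X → ℝ) (ε : ℝ) (x : X) :
    0 < uniformizationDensity b ε x :=
  Real.exp_pos _

section ConformalDeformation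

variable [MetricSpace X] {b : X → ℝ} {ε : ℝ}

local notation "ρb" => uniformizationDensity b ε

local notation "dε" => confDistWrt (distFun X) (uniformizationDensity b ε)

lemma continuous_uniformizationDensity (hb : LipschitzWith 1 b) : Continuous ρb :=
  Real.continuous_exp.comp (continuous_const.mul hb.continuous)

lemma uniformizationDensity_le_mul_exp (hb : LipschitzWith 1 b) (hε : 0 ≤ ε) {p q : X}
    {r : ℝ} (hr : dist p q ≤ r) : ρb q ≤ ρb p * Real.exp (ε * r) := by
  have := hb.dist_le_mul p q
  rw [Real.dist_eq, NNReal.coe_one, one_mul] at this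
  rw [uniformizationDensity, uniformizationDensity, ← Real.exp_add, Real.exp_le_exp]
  nlinarith [le_abs_self (b p - b q)]

lemma mul_exp_neg_le_uniformizationDensity (hb : LipschitzWith 1 b) (hε : 0 ≤ ε) {p q : X}
    {r : ℝ} (hr : dist p q ≤ r) : ρb p * Real.exp (-(ε * r)) ≤ ρb q := by
  have := hb.dist_le_mul p q
  rw [Real.dist_eq, NNReal.coe_one, one_mul] at this
  rw [uniformizationDensity, uniformizationDensity, ← Real.exp_add, Real.exp_le_exp]
  nlinarith [neg_abs_le (b p - b q)]

lemma confDist_triangle (hGeo : GeodesicSpaceWrt (distFun X)) (x y z : X) :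
    dε x z ≤ dε x y + dε y z :=
  confDistWrt_triangle (fun w => (uniformizationDensity_pos b ε w).le) dist_triangle
    (confSet_nonempty_of_geodesicSpace hGeo _ x y) (confSet_nonempty_of_geodesicSpace hGeo _ y z)

lemma confDist_nonneg (x y : X) : 0 ≤ dε x y :=
  confDistWrt_nonneg (fun w => (uniformizationDensity_pos b ε w).le) x y

lemma IsGeodesicSegWrt.confDist_le {γ : ℝ → X} {p q : X}
    (hγ : IsGeodesicSegWrt (distFun X) γ p q) {a a' c : ℝ} (ha : 0 ≤ a) (haa' : a ≤ a')
    (ha' : a' ≤ dist p q) (hc : ∀ u ∈ Icc a a', ρb (γ u) ≤ c) :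
    dε (γ a) (γ a') ≤ c * (a' - a) := by
  have hadm : IsAdmissibleWrt (distFun X) (fun t => γ (a + t)) (a' - a) :=
    isAdmissibleWrt_shift fun s hs t ht =>
      (hγ.2.2 s ⟨by linarith [hs.1], (show s ≤ dist p q by linarith [hs.2])⟩
        t ⟨by linarith [ht.1], (show t ≤ dist p q by linarith [ht.2])⟩).le
  simpa using confDistWrt_le_mul (fun w => (uniformizationDensity_pos b ε w).le)
    (sub_nonneg.2 haa') hadm fun t ht => hc _ ⟨by linarith [ht.1], by linarith [ht.2]⟩

lemma IsGeodesicSegWrt.isAdmissibleWrt_rescale {γ : ℝ → X} {p q : X}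
    (hγ : IsGeodesicSegWrt (distFun X) γ p q) {c : ℝ} (hc : 0 < c)
    (hργ : ∀ u ∈ Icc 0 (dist p q), ρb (γ u) ≤ c) :
    IsAdmissibleWrt dε (fun t => γ (t / c)) (c * dist p q) := by
  have key : ∀ s t, 0 ≤ s → s ≤ t → t ≤ c * dist p q → dε (γ (s / c)) (γ (t / c)) ≤ t - s := by
    intro s t hs hst ht
    have hsc : s / c ≤ t / c := div_le_div_of_nonneg_right hst hc.le
    have htc : t / c ≤ dist p q := (div_le_iff₀' hc).2 ht
    have := hγ.confDist_le (div_nonneg hs hc.le) hsc htc fun u hu =>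
      hργ u ⟨(div_nonneg hs hc.le).trans hu.1, hu.2.trans htc⟩
    rwa [← sub_div, mul_div_cancel₀ _ hc.ne'] at this
  intro s hs t ht
  rcases le_total s t with h | h
  · exact (key s t hs.1 h ht.2).trans (by rw [abs_sub_comm]; exact le_abs_self _)
  · rw [confDistWrt_comm]
    exact (key t s ht.1 h hs.2).trans (le_abs_self _)

lemma confDist_le_mul_exp (hb : LipschitzWith 1 b) (hε : 0 ≤ ε)
    (hGeo : GeodesicSpaceWrt (distFun X)) {p q : X} {r : ℝ} (hr : dist p q ≤ r) :
    dε p q ≤ ρb p * Real.exp (ε * r) * r := by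
  obtain ⟨γ, hγ⟩ := hGeo p q
  have := hγ.confDist_le le_rfl dist_nonneg le_rfl fun u hu =>
    uniformizationDensity_le_mul_exp hb hε ((hγ.dist_left hu).trans_le (hu.2.trans hr))
  rw [hγ.1, show γ (dist p q) = q from hγ.2.1, sub_zero] at this
  exact this.trans (mul_le_mul_of_nonneg_left hr
    (mul_nonneg (uniformizationDensity_pos b ε p).le (Real.exp_pos _).le))

lemma le_confDist (hb : LipschitzWith 1 b) (hε : 0 < ε)
    (hGeo : GeodesicSpaceWrt (distFun X)) (p q : X) :
    ρb p / ε * (1 - Real.exp (-(ε * dist p q))) ≤ dε p q := by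
  refine le_confDistWrt (confSet_nonempty_of_geodesicSpace hGeo _ p q) ?_
  rintro T γ hT hγ rfl rfl
  have hdist : ∀ t ∈ Icc 0 T, dist (γ 0) (γ t) ≤ t := fun t ht => by
    simpa [abs_of_nonneg ht.1] using hγ 0 (left_mem_Icc.2 hT) t ht
  have hργ : IntervalIntegrable (fun t => ρb (γ t)) MeasureTheory.volume 0 T :=
    ((continuous_uniformizationDensity hb).comp_continuousOn
      hγ.continuousOn).intervalIntegrable_of_Icc hT
  calc ρb (γ 0) / ε * (1 - Real.exp (-(ε * dist (γ 0) (γ T))))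
      ≤ ρb (γ 0) * ((1 - Real.exp (-(ε * T))) / ε) := by
        rw [div_mul_eq_mul_div, mul_div_assoc]
        gcongr
        · exact (uniformizationDensity_pos b ε _).le
        · exact hdist T (right_mem_Icc.2 hT)
    _ = ∫ t in (0:ℝ)..T, ρb (γ 0) * Real.exp (-(ε * t)) := by
        rw [intervalIntegral.integral_const_mul, integral_exp_neg_mul hε.ne']
    _ ≤ ∫ t in (0:ℝ)..T, ρb (γ t) :=
        intervalIntegral.integral_mono_on hT
          (Continuous.intervalIntegrable (by fun_prop) _ _) hργ fun t ht =>
          mul_exp_neg_le_uniformizationDensity hb hε.le (hdist t ht)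

lemma dist_le_of_confDist_le (hb : LipschitzWith 1 b) (hε : 0 < ε)
    (hGeo : GeodesicSpaceWrt (distFun X)) {p q : X} (h : dε p q ≤ ρb p / (2 * ε)) :
    dist p q ≤ 2 * dε p q / ρb p := by
  have hρ := uniformizationDensity_pos b ε p
  set v := ε * dε p q / ρb p
  have hv0 : 0 ≤ v := div_nonneg (mul_nonneg hε.le (confDist_nonneg p q)) hρ.le
  have hv : v ≤ 1 / 2 := by
    rw [div_le_iff₀ hρ]
    rw [le_div_iff₀ (by positivity)] at h
    linarith
  have hlow : 1 - Real.exp (-(ε * dist p q)) ≤ v := by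
    have := le_confDist hb hε hGeo p q
    rw [le_div_iff₀ hρ]
    rw [div_mul_eq_mul_div, div_le_iff₀ hε] at this
    linarith
  have : -(2 * v) ≤ -(ε * dist p q) :=
    Real.exp_le_exp.1 ((exp_neg_two_mul_le_one_sub hv0 hv).trans (by linarith))
  rw [le_div_iff₀ hρ]
  have hv' : v * ρb p = ε * dε p q := div_mul_cancel₀ _ hρ.ne'
  nlinarith

lemma IsAdmissibleWrt.continuousOn_of_confDist (hb : LipschitzWith 1 b) (hε : 0 < ε)
    (hGeo : GeodesicSpaceWrt (distFun X)) {σ : ℝ → X} {T : ℝ}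
    (hσ : IsAdmissibleWrt dε σ T) : ContinuousOn σ (Icc 0 T) := by
  intro t ht
  rw [Metric.continuousWithinAt_iff]
  intro θ hθ
  have hρ := uniformizationDensity_pos b ε (σ t)
  refine ⟨min (ρb (σ t) / (2 * ε)) (θ * ρb (σ t) / 4),
    lt_min (div_pos hρ (mul_pos two_pos hε)) (div_pos (mul_pos hθ hρ) four_pos),
    fun s hs hst => ?_⟩
  have hd : dε (σ t) (σ s) ≤ dist s t := by
    simpa [Real.dist_eq, abs_sub_comm] using hσ t ht s hs
  rw [dist_comm]
  calc dist (σ t) (σ s) ≤ 2 * dε (σ t) (σ s) / ρb (σ t) :=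
        dist_le_of_confDist_le hb hε hGeo (hd.trans (hst.le.trans (min_le_left _ _)))
    _ ≤ 2 * (θ * ρb (σ t) / 4) / ρb (σ t) := by
        gcongr
        exact hd.trans (hst.le.trans (min_le_right _ _))
    _ < θ := by field_simp; linarith

end ConformalDeformation

/-- Bounds `d_ε(z, Γ 0) + d_ε(Γ 0, ∂X_ε)` for the ray `Γ` given by
`BhatStarlike.exists_escapeRay`. -/
def bdryConst (K ε δ : ℝ) : ℝ := Real.exp (ε * (K + 1)) * (K + 1 + Real.exp (2 * ε * δ) / ε)

lemma bdryConst_pos {K ε δ : ℝ} (hK : 0 ≤ K) (hε : 0 < ε) : 0 < bdryConst K ε δ := by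
  unfold bdryConst
  positivity

lemma uniformizationDensity_le_of_growth {b : X → ℝ} {ε δ : ℝ} (hε : 0 ≤ ε) {Γ : ℝ → X}
    (hgrow : ∀ t' t, 0 ≤ t' → t' ≤ t → b (Γ t') + (t - t') - 2 * δ ≤ b (Γ t)) {m u : ℝ}
    (hm : 0 ≤ m) (hmu : m ≤ u) :
    uniformizationDensity b ε (Γ u) ≤
      uniformizationDensity b ε (Γ m) * Real.exp (2 * ε * δ) * Real.exp (-(ε * (u - m))) := by
  simp only [uniformizationDensity, ← Real.exp_add, Real.exp_le_exp]
  nlinarith [mul_le_mul_of_nonneg_left (hgrow m u hm hmu) hε]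

section BoundaryOfDeformation

variable [MetricSpace X] {b : X → ℝ} {ε δ : ℝ}

local notation "ρb" => uniformizationDensity b ε

local notation "dε" => confDistWrt (distFun X) (uniformizationDensity b ε)

lemma confDist_le_of_growth (hε : 0 < ε) {Γ : ℝ → X} (hΓ : IsGeodesicRayWrt (distFun X) Γ)
    (hgrow : ∀ t' t, 0 ≤ t' → t' ≤ t → b (Γ t') + (t - t') - 2 * δ ≤ b (Γ t)) {m n : ℝ}
    (hm : 0 ≤ m) (hmn : m ≤ n) :
    dε (Γ m) (Γ n) ≤ ρb (Γ m) * Real.exp (2 * ε * δ) / ε := by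
  set A := ρb (Γ m) * Real.exp (2 * ε * δ)
  have hA : 0 ≤ A := mul_nonneg (uniformizationDensity_pos b ε _).le (Real.exp_pos _).le
  have hadm : IsAdmissibleWrt (distFun X) (fun t => Γ (m + t)) (n - m) :=
    isAdmissibleWrt_shift fun s hs t ht =>
      (hΓ s (hm.trans hs.1) t (hm.trans ht.1)).le
  have := confDistWrt_le_integral (fun w => (uniformizationDensity_pos b ε w).le)
    (sub_nonneg.2 hmn) hadm
  simp only [add_zero, add_sub_cancel] at this
  calc dε (Γ m) (Γ n) ≤ ∫ t in (0:ℝ)..(n - m), ρb (Γ (m + t)) := this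
    _ ≤ ∫ t in (0:ℝ)..(n - m), A * Real.exp (-(ε * t)) :=
      intervalIntegral_le_of_le_of_nonneg (sub_nonneg.2 hmn)
        (Continuous.intervalIntegrable (by fun_prop) _ _)
        (fun _ _ => mul_nonneg hA (Real.exp_pos _).le)
        fun t ht => by
          simpa [A] using uniformizationDensity_le_of_growth hε.le hgrow hm (u := m + t)
            (by linarith [ht.1])
    _ = A * ((1 - Real.exp (-(ε * (n - m)))) / ε) := by
      rw [intervalIntegral.integral_const_mul, integral_exp_neg_mul hε.ne']
    _ ≤ A / ε := by
      rw [mul_div_assoc']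
      exact div_le_div_of_nonneg_right
        (mul_le_of_le_one_right hA (by linarith [Real.exp_pos (-(ε * (n - m)))])) hε.le

lemma cauchyWrt_of_growth (hε : 0 < ε) {Γ : ℝ → X} (hΓ : IsGeodesicRayWrt (distFun X) Γ)
    (hgrow : ∀ t' t, 0 ≤ t' → t' ≤ t → b (Γ t') + (t - t') - 2 * δ ≤ b (Γ t)) :
    CauchyWrt dε fun n : ℕ => Γ n := by
  set A := ρb (Γ 0) * Real.exp (2 * ε * δ) * Real.exp (2 * ε * δ) / ε
  have hstep : ∀ m n : ℕ, m ≤ n → dε (Γ m) (Γ n) ≤ A * Real.exp (-(ε * m)) := fun m n hmn => by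
    refine (confDist_le_of_growth hε hΓ hgrow m.cast_nonneg (Nat.cast_le.2 hmn)).trans ?_
    have := uniformizationDensity_le_of_growth (b := b) hε.le hgrow le_rfl m.cast_nonneg
    rw [sub_zero] at this
    calc ρb (Γ m) * Real.exp (2 * ε * δ) / ε
        ≤ ρb (Γ 0) * Real.exp (2 * ε * δ) * Real.exp (-(ε * m)) * Real.exp (2 * ε * δ) / ε :=
          div_le_div_of_nonneg_right (mul_le_mul_of_nonneg_right this (Real.exp_pos _).le) hε.le
      _ = A * Real.exp (-(ε * m)) := by ring
  have hlim : Tendsto (fun m : ℕ => A * Real.exp (-(ε * m))) atTop (𝓝 0) := by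
    simpa using (Real.tendsto_exp_atBot.comp (tendsto_neg_atTop_atBot.comp
      (tendsto_natCast_atTop_atTop.const_mul_atTop hε))).const_mul A
  intro θ hθ
  obtain ⟨N, hN⟩ := eventually_atTop.1 (hlim.eventually (gt_mem_nhds hθ))
  refine ⟨N, fun m hm n hn => ?_⟩
  rcases le_total m n with h | h
  · exact (hstep m n h).trans_lt (hN m hm)
  · rw [confDistWrt_comm]
    exact (hstep n m h).trans_lt (hN n hn)

lemma tendsto_density_mul_one_sub_exp (hε : 0 < ε) {u : ℕ → X} {p : X}
    (hu : Tendsto (fun n => dist p (u n)) atTop atTop) :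
    Tendsto (fun n => ρb p / ε * (1 - Real.exp (-(ε * dist p (u n))))) atTop
      (𝓝 (ρb p / ε)) := by
  have hexp : Tendsto (fun n => Real.exp (-(ε * dist p (u n)))) atTop (𝓝 0) :=
    Real.tendsto_exp_atBot.comp (tendsto_neg_atTop_atBot.comp (hu.const_mul_atTop hε))
  simpa using ((tendsto_const_nhds (x := (1:ℝ))).sub hexp).const_mul (ρb p / ε)

variable (hb : LipschitzWith 1 b) (hGeo : GeodesicSpaceWrt (distFun X))

include hb hGeo

lemma not_convWrt_of_tendsto_dist (hε : 0 < ε) {u : ℕ → X} {z : X}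
    (hu : Tendsto (fun n => dist z (u n)) atTop atTop) : ¬ ConvWrt dε u := by
  rintro ⟨y, hy⟩
  have hyu : Tendsto (fun n => dist y (u n)) atTop atTop :=
    tendsto_atTop_mono (fun n => by linarith [dist_triangle z y (u n)])
      (tendsto_atTop_add_const_right _ (-dist z y) hu)
  have hle := le_of_tendsto_of_tendsto' (tendsto_density_mul_one_sub_exp hε hyu)
    (by simpa only [confDistWrt_comm] using hy) fun n => le_confDist hb hε hGeo y (u n)
  linarith [div_pos (uniformizationDensity_pos b ε y) hε]

lemma exists_cauchyWrt_not_convWrt_confDist_le (hδ : 0 ≤ δ) (hε : 0 < ε)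
    (hHyp : DeltaHyperbolicWrt (distFun X) δ) {K : ℝ} (hbK : BhatStarlike (distFun X) K b)
    (z : X) :
    ∃ u : ℕ → X, CauchyWrt dε u ∧ ¬ ConvWrt dε u ∧ ∀ n, dε z (u n) ≤ bdryConst K ε δ * ρb z := by
  obtain ⟨Γ, hΓ, hzΓ, hgrow⟩ := hbK.exists_escapeRay hδ hGeo hHyp z
  refine ⟨fun n => Γ n, cauchyWrt_of_growth hε hΓ hgrow,
    not_convWrt_of_tendsto_dist (z := Γ 0) hb hGeo hε ?_, fun n => ?_⟩
  · refine tendsto_natCast_atTop_atTop.congr fun n => ?_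
    rw [hΓ.dist_eq_sub le_rfl n.cast_nonneg, sub_zero]
  have hz0 := confDist_le_mul_exp hb hε.le hGeo hzΓ
  have hΓ0 : ρb (Γ 0) * Real.exp (2 * ε * δ) ≤
      ρb z * Real.exp (ε * (K + 1)) * Real.exp (2 * ε * δ) :=
    mul_le_mul_of_nonneg_right (uniformizationDensity_le_mul_exp hb hε.le hzΓ) (Real.exp_pos _).le
  have h0n := confDist_le_of_growth hε hΓ hgrow le_rfl (n.cast_nonneg (α := ℝ))
  calc dε z (Γ n) ≤ dε z (Γ 0) + dε (Γ 0) (Γ n) := confDist_triangle hGeo _ _ _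
    _ ≤ ρb z * Real.exp (ε * (K + 1)) * (K + 1) +
        ρb z * Real.exp (ε * (K + 1)) * Real.exp (2 * ε * δ) / ε :=
      add_le_add hz0 (h0n.trans (div_le_div_of_nonneg_right hΓ0 hε.le))
    _ = bdryConst K ε δ * ρb z := by rw [bdryConst]; ring

lemma incompleteWrt_confDist (hδ : 0 ≤ δ) (hε : 0 < ε)
    (hHyp : DeltaHyperbolicWrt (distFun X) δ) {K : ℝ} (hbK : BhatStarlike (distFun X) K b)
    (z : X) : IncompleteWrt dε := by
  obtain ⟨u, hu, hnc, -⟩ := exists_cauchyWrt_not_convWrt_confDist_le hb hGeo hδ hε hHyp hbK z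
  exact ⟨u, hu, hnc⟩

lemma bdryDist_le (hδ : 0 ≤ δ) (hε : 0 < ε) (hHyp : DeltaHyperbolicWrt (distFun X) δ) {K : ℝ}
    (hbK : BhatStarlike (distFun X) K b) (z : X) :
    bdryDistWrt dε z ≤ bdryConst K ε δ * ρb z := by
  obtain ⟨u, hu, hnc, hle⟩ := exists_cauchyWrt_not_convWrt_confDist_le hb hGeo hδ hε hHyp hbK z
  obtain ⟨r, hr⟩ := hu.exists_tendsto (confDist_triangle hGeo) z
  exact (bdryDistWrt_le_of_tendsto confDist_nonneg hu hnc hr).trans (le_of_tendsto' hr hle)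

lemma bdryDist_le_add (hδ : 0 ≤ δ) (hε : 0 < ε) (hHyp : DeltaHyperbolicWrt (distFun X) δ)
    {K : ℝ} (hbK : BhatStarlike (distFun X) K b) (p q : X) :
    bdryDistWrt dε p ≤ dε p q + bdryDistWrt dε q :=
  bdryDistWrt_le_add (confDist_triangle hGeo) confDist_nonneg
    (incompleteWrt_confDist hb hGeo hδ hε hHyp hbK p) p q

lemma tendsto_confDist_nhds (hε : 0 ≤ ε) (y : X) : Tendsto (fun x => dε x y) (𝓝 y) (𝓝 0) := by
  have hcont : Continuous fun x => ρb x * Real.exp (ε * dist x y) * dist x y := by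
    have := continuous_uniformizationDensity (ε := ε) hb
    fun_prop
  have h0 := hcont.tendsto y
  simp only [dist_self, mul_zero] at h0
  exact tendsto_of_tendsto_of_tendsto_of_le_of_le tendsto_const_nhds h0
    (fun x => confDist_nonneg x y)
    fun x => confDist_le_mul_exp hb hε hGeo le_rfl

lemma tendsto_dist_atTop_of_not_convWrt [ProperSpace X] (hε : 0 ≤ ε) {u : ℕ → X}
    (hu : CauchyWrt dε u) (hnc : ¬ ConvWrt dε u) (z : X) :
    Tendsto (fun n => dist z (u n)) atTop atTop := by
  refine tendsto_atTop.2 fun R => ?_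
  by_contra hR
  obtain ⟨φ, hφ, hφR⟩ := extraction_of_frequently_atTop (not_eventually.1 hR)
  obtain ⟨y, -, ψ, hψ, hy⟩ := (isCompact_closedBall z R).tendsto_subseq (x := u ∘ φ)
    fun k => mem_closedBall'.2 (not_le.1 (hφR k)).le
  exact hnc (hu.convWrt_of_subseq (confDist_triangle hGeo) (hφ.comp hψ)
    ((tendsto_confDist_nhds hb hGeo hε y).comp hy) confDist_nonneg)

lemma le_bdryDist [ProperSpace X] (hδ : 0 ≤ δ) (hε : 0 < ε)
    (hHyp : DeltaHyperbolicWrt (distFun X) δ) {K : ℝ} (hbK : BhatStarlike (distFun X) K b)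
    (z : X) : ρb z / ε ≤ bdryDistWrt dε z := by
  obtain ⟨u, hu, hnc, -⟩ := exists_cauchyWrt_not_convWrt_confDist_le hb hGeo hδ hε hHyp hbK z
  refine le_bdryDistWrt ⟨u, _, hu, hnc, (hu.exists_tendsto (confDist_triangle hGeo) z).choose_spec⟩
    fun v r hv hnc' hr => ?_
  exact le_of_tendsto_of_tendsto' (tendsto_density_mul_one_sub_exp hε
    (tendsto_dist_atTop_of_not_convWrt hb hGeo hε.le hv hnc' z)) hr
    fun n => le_confDist hb hε hGeo z (v n)

end BoundaryOfDeformation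

lemma quasiHypWrt_eq (e : X → X → ℝ) :
    quasiHypWrt e = confDistWrt e fun z => (bdryDistWrt e z)⁻¹ := rfl

section QuasiHyperbolicBounds

variable [MetricSpace X] {b : X → ℝ} {ε δ K : ℝ}

local notation "ρb" => uniformizationDensity b ε

local notation "dε" => confDistWrt (distFun X) (uniformizationDensity b ε)

local notation "kε" => quasiHypWrt (confDistWrt (distFun X) (uniformizationDensity b ε))

lemma confSet_confDist_nonempty (hb : LipschitzWith 1 b) (hε : 0 ≤ ε)
    (hGeo : GeodesicSpaceWrt (distFun X)) (ρ : X → ℝ) (p q : X) : (confSet dε ρ p q).Nonempty := by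
  obtain ⟨γ, hγ⟩ := hGeo p q
  have hc := mul_pos (uniformizationDensity_pos b ε p) (Real.exp_pos (ε * dist p q))
  refine ⟨_, _, _, mul_nonneg hc.le dist_nonneg, hγ.isAdmissibleWrt_rescale hc fun u hu =>
    uniformizationDensity_le_mul_exp hb hε ((hγ.dist_left hu).trans_le hu.2),
    by simp [hγ.1], ?_, rfl⟩
  rw [mul_div_cancel_left₀ _ hc.ne']
  exact hγ.2.1

lemma quasiHyp_triangle (hb : LipschitzWith 1 b) (hε : 0 ≤ ε)
    (hGeo : GeodesicSpaceWrt (distFun X)) (x y z : X) : kε x z ≤ kε x y + kε y z :=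
  confDistWrt_triangle (fun _ => inv_nonneg.2 (bdryDistWrt_nonneg confDist_nonneg _))
    (confDist_triangle hGeo) (confSet_confDist_nonempty hb hε hGeo _ x y)
    (confSet_confDist_nonempty hb hε hGeo _ y z)

variable [ProperSpace X] (hδ : 0 ≤ δ) (hε : 0 < ε) (hGeo : GeodesicSpaceWrt (distFun X))
  (hHyp : DeltaHyperbolicWrt (distFun X) δ) (hbK : BhatStarlike (distFun X) K b)

include hδ hε hGeo hHyp hbK

lemma bdryDist_pos (z : X) : 0 < bdryDistWrt dε z :=
  (div_pos (uniformizationDensity_pos b ε z) hε).trans_le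
    (le_bdryDist hbK.lipschitzWith hGeo hδ hε hHyp hbK z)

lemma inv_bdryDist_le (z : X) : (bdryDistWrt dε z)⁻¹ ≤ ε / ρb z := by
  rw [← inv_div]
  exact inv_anti₀ (div_pos (uniformizationDensity_pos b ε z) hε)
    (le_bdryDist hbK.lipschitzWith hGeo hδ hε hHyp hbK z)

lemma quasiHyp_le_of_dist_le_one {p q : X} (hpq : dist p q ≤ 1) :
    kε p q ≤ ε * Real.exp (2 * ε) * dist p q := by
  have hb := hbK.lipschitzWith
  obtain ⟨γ, hγ⟩ := hGeo p q
  have hρp := uniformizationDensity_pos b ε p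
  set c := ρb p * Real.exp ε
  have hc : 0 < c := mul_pos hρp (Real.exp_pos ε)
  have hadm : IsAdmissibleWrt dε (fun t => γ (t / c)) (c * dist p q) :=
    hγ.isAdmissibleWrt_rescale hc fun u hu =>
      (uniformizationDensity_le_mul_exp hb hε.le
        ((hγ.dist_left hu).trans_le (hu.2.trans hpq))).trans_eq (by rw [mul_one])
  have hbound : ∀ t ∈ Icc 0 (c * dist p q),
      (bdryDistWrt dε (γ (t / c)))⁻¹ ≤ ε * Real.exp ε / ρb p := by
    intro t ht
    have htc : t / c ∈ Icc 0 (dist p q) := ⟨div_nonneg ht.1 hc.le, (div_le_iff₀' hc).2 ht.2⟩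
    have hlow := mul_exp_neg_le_uniformizationDensity hb hε.le
      ((hγ.dist_left htc).trans_le (htc.2.trans hpq))
    calc (bdryDistWrt dε (γ (t / c)))⁻¹ ≤ ε / ρb (γ (t / c)) :=
          inv_bdryDist_le hδ hε hGeo hHyp hbK _
      _ ≤ ε / (ρb p * Real.exp (-(ε * 1))) :=
        div_le_div_of_nonneg_left hε.le (mul_pos hρp (Real.exp_pos _)) hlow
      _ = ε * Real.exp ε / ρb p := by rw [mul_one, Real.exp_neg]; field_simp
  have := confDistWrt_le_mul (ρ := fun z => (bdryDistWrt dε z)⁻¹)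
    (fun _ => inv_nonneg.2 (bdryDistWrt_nonneg confDist_nonneg _))
    (mul_nonneg hc.le dist_nonneg) hadm hbound
  rw [zero_div, hγ.1, mul_div_cancel_left₀ _ hc.ne', show γ (dist p q) = q from hγ.2.1] at this
  rw [quasiHypWrt_eq]
  refine this.trans (le_of_eq ?_)
  rw [show 2 * ε = ε + ε by ring, Real.exp_add]
  simp only [c]
  field_simp

lemma quasiHyp_le (x y : X) : kε x y ≤ ε * Real.exp (2 * ε) * dist x y :=
  le_mul_dist_of_local_bound hGeo (quasiHyp_triangle hbK.lipschitzWith hε.le hGeo) one_pos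
    (fun _ _ => quasiHyp_le_of_dist_le_one hδ hε hGeo hHyp hbK) x y

lemma IsAdmissibleWrt.continuousOn_inv_bdryDist {σ : ℝ → X} {T : ℝ}
    (hσ : IsAdmissibleWrt dε σ T) :
    ContinuousOn (fun t => (bdryDistWrt dε (σ t))⁻¹) (Icc 0 T) := by
  have hlip : LipschitzOnWith 1 (fun t => bdryDistWrt dε (σ t)) (Icc 0 T) :=
    LipschitzOnWith.of_le_add fun s hs t ht => by
      have := hσ s hs t ht
      rw [← Real.dist_eq] at this
      linarith [bdryDist_le_add hbK.lipschitzWith hGeo hδ hε hHyp hbK (σ s) (σ t)]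
  exact hlip.continuousOn.inv₀ fun t _ => (bdryDist_pos hδ hε hGeo hHyp hbK (σ t)).ne'

/-- On `[s, t]` the curve stays within `1 / ε` of `σ s`, where `ρ` varies by a factor
at most `e`. -/
lemma mul_dist_le_integral_inv_bdryDist (hK : 0 ≤ K) {σ : ℝ → X} {T : ℝ}
    (hσ : IsAdmissibleWrt dε σ T) {s t : ℝ} (hs : 0 ≤ s) (hst : s ≤ t) (ht : t ≤ T)
    (hts : t - s ≤ ρb (σ s) / (2 * ε)) :
    (2 * Real.exp 1 * bdryConst K ε δ)⁻¹ * dist (σ s) (σ t) ≤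
      ∫ r in s..t, (bdryDistWrt dε (σ r))⁻¹ := by
  have hb := hbK.lipschitzWith
  have hC := bdryConst_pos (δ := δ) hK hε
  have hρs := uniformizationDensity_pos b ε (σ s)
  have hdist : ∀ r ∈ Icc s t, dist (σ s) (σ r) ≤ 2 * (r - s) / ρb (σ s) := by
    intro r hr
    have hd : dε (σ s) (σ r) ≤ r - s := by
      simpa [abs_of_nonpos (sub_nonpos.2 hr.1)] using
        hσ s ⟨hs, hst.trans ht⟩ r ⟨hs.trans hr.1, hr.2.trans ht⟩
    refine (dist_le_of_confDist_le hb hε hGeo (hd.trans (by linarith [hr.2]))).trans ?_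
    gcongr
  have hlow : ∀ r ∈ Icc s t,
      (bdryConst K ε δ * (ρb (σ s) * Real.exp 1))⁻¹ ≤ (bdryDistWrt dε (σ r))⁻¹ := by
    intro r hr
    have hts' : (t - s) * (2 * ε) ≤ ρb (σ s) := (le_div_iff₀ (mul_pos two_pos hε)).1 hts
    have hsr : dist (σ s) (σ r) ≤ 1 / ε := (hdist r hr).trans (by
      rw [div_le_div_iff₀ hρs hε]
      nlinarith [mul_le_mul_of_nonneg_right hr.2 hε.le])
    have hρr := uniformizationDensity_le_mul_exp hb hε.le hsr
    rw [mul_one_div_cancel hε.ne'] at hρr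
    exact inv_anti₀ (bdryDist_pos hδ hε hGeo hHyp hbK _)
      ((bdryDist_le hb hGeo hδ hε hHyp hbK _).trans (mul_le_mul_of_nonneg_left hρr hC.le))
  have hint : IntervalIntegrable (fun r => (bdryDistWrt dε (σ r))⁻¹) MeasureTheory.volume s t :=
    ((hσ.continuousOn_inv_bdryDist hδ hε hGeo hHyp hbK).mono
      (Icc_subset_Icc hs ht)).intervalIntegrable_of_Icc hst
  have hI := intervalIntegral.integral_mono_on hst intervalIntegrable_const hint hlow
  rw [intervalIntegral.integral_const, smul_eq_mul] at hI
  calc (2 * Real.exp 1 * bdryConst K ε δ)⁻¹ * dist (σ s) (σ t)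
      ≤ (2 * Real.exp 1 * bdryConst K ε δ)⁻¹ * (2 * (t - s) / ρb (σ s)) :=
        mul_le_mul_of_nonneg_left (hdist t ⟨hst, le_rfl⟩) (by positivity)
    _ = (t - s) * (bdryConst K ε δ * (ρb (σ s) * Real.exp 1))⁻¹ := by
        field_simp
    _ ≤ _ := hI

lemma le_quasiHyp (hK : 0 ≤ K) (x y : X) :
    (2 * Real.exp 1 * bdryConst K ε δ)⁻¹ * dist x y ≤ kε x y := by
  have hb := hbK.lipschitzWith
  rw [quasiHypWrt_eq]
  refine le_confDistWrt (confSet_confDist_nonempty hb hε.le hGeo _ x y) ?_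
  rintro T σ hT hσ rfl rfl
  obtain ⟨tm, -, hmin⟩ := isCompact_Icc.exists_isMinOn (nonempty_Icc.2 hT)
    ((continuous_uniformizationDensity hb).comp_continuousOn
      (hσ.continuousOn_of_confDist hb hε hGeo))
  have hm := uniformizationDensity_pos b ε (σ tm)
  exact mul_dist_le_integral_of_local_bound hT (div_pos hm (mul_pos two_pos hε))
    (inv_nonneg.2 (mul_nonneg (by positivity) (bdryConst_pos hK hε).le))
    ((hσ.continuousOn_inv_bdryDist hδ hε hGeo hHyp hbK).intervalIntegrable_of_Icc hT)
    fun s t hs hst ht hts => mul_dist_le_integral_inv_bdryDist hδ hε hGeo hHyp hbK hK hσ hs hst ht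
      (hts.trans (div_le_div_of_nonneg_right (hmin ⟨hs, hst.trans ht⟩) (by positivity)))

end QuasiHyperbolicBounds

theorem statement16_general (δ K ε M : ℝ) (hδ : 0 ≤ δ) (hK : 0 ≤ K) (hε : 0 < ε) :
    ∃ H : ℝ, 1 ≤ H ∧
      ∀ (X : Type*) [MetricSpace X] [ProperSpace X],
        GeodesicSpaceWrt (distFun X) → DeltaHyperbolicWrt (distFun X) δ →
        ∀ b : X → ℝ, BhatStarlike (distFun X) K b →
          IsGHDensityWrt (distFun X) M (uniformizationDensity b ε) →
          ∀ x y : X,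
            H⁻¹ * dist x y ≤
              quasiHypWrt (confDistWrt (distFun X) (uniformizationDensity b ε)) x y ∧
            quasiHypWrt (confDistWrt (distFun X) (uniformizationDensity b ε)) x y ≤
              H * dist x y := by
  set L := 2 * Real.exp 1 * bdryConst K ε δ
  have hL : 0 < L := mul_pos (mul_pos two_pos (Real.exp_pos 1)) (bdryConst_pos hK hε)
  refine ⟨max 1 (max (ε * Real.exp (2 * ε)) L), le_max_left _ _, ?_⟩
  intro X _ _ hGeo hHyp b hb _ x y
  constructor
  · calc (max 1 (max (ε * Real.exp (2 * ε)) L))⁻¹ * dist x y ≤ L⁻¹ * dist x y :=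
          mul_le_mul_of_nonneg_right
            (inv_anti₀ hL (le_max_of_le_right (le_max_right _ _))) dist_nonneg
      _ ≤ _ := le_quasiHyp hδ hε hGeo hHyp hb hK x y
  · exact (quasiHyp_le hδ hε hGeo hHyp hb x y).trans (mul_le_mul_of_nonneg_right
      (le_max_of_le_right (le_max_left _ _)) dist_nonneg)

/-- If `X` is a proper geodesic `δ`-hyperbolic space, `b ∈ 𝔅̂(X)` with
`X` `K`-roughly starlike from its basepoint, and `ρ_{ε,b}` is a GH-density with constant
`M`, then the identity map from `X` to the quasihyperbolization `Y` of `X_{ε,b}` is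
`H`-biLipschitz with `H` depending only on `δ`, `K`, `ε`, `M`. -/
theorem statement16 (δ K ε M : ℝ) (hδ : 0 ≤ δ) (hK : 0 ≤ K) (hε : 0 < ε) (hM : 1 ≤ M) :
    ∃ H : ℝ, 1 ≤ H ∧
      ∀ (X : Type*) [MetricSpace X] [ProperSpace X],
        GeodesicSpaceWrt (distFun X) → DeltaHyperbolicWrt (distFun X) δ →
        ∀ b : X → ℝ, BhatStarlike (distFun X) K b →
          IsGHDensityWrt (distFun X) M (uniformizationDensity b ε) →
          ∀ x y : X,
            H⁻¹ * dist x y ≤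
              quasiHypWrt (confDistWrt (distFun X) (uniformizationDensity b ε)) x y ∧
            quasiHypWrt (confDistWrt (distFun X) (uniformizationDensity b ε)) x y ≤
              H * dist x y :=
  statement16_general δ K ε M hδ hK hε

end Paper

end
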